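/- arXiv:2604.00569 — 4 statements merged into one kernel-verified Lean document; each statement's English description precedes it below -/
import Mathlib

section
/- Let f : ℝⁿ → ℝ be convex, differentiable, and L-smooth with L > 0, and let x⋆ be a global minimizer of f. Let {x^k}, {y^k}, {t_k}, {f̂^k} be generated by the accelerated proximal bundle method (APBM) with models f̂^k satisfying Assumption 1. Then for every k ≥ 1, f(x^k) − f(x⋆) ≤ L‖x⁰ − x⋆‖² / (2 t_k²). -/
/-!
Since the prox objective `f̂ᵏ + L/2‖· - yᵏ‖²` is `L`-strongly convex, its minimizer satisfies
a three-point inequality; with the lower model bound and the descent lemma it gives, for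
every `z`, `f(xᵏ) + L/2‖z - xᵏ‖² ≤ f(z) + L/2‖z - yᵏ‖²`. Taking
`z = (1 - 1/tₖ₊₁) xᵏ + (1/tₖ₊₁) x⋆`, multiplying by `tₖ₊₁²` and using convexity together with
`tₖ₊₁² - tₖ₊₁ = tₖ²` shows that the energy
`tₖ² (f(xᵏ) - f(x⋆)) + L/2‖tₖ xᵏ - (tₖ - 1) x^(k-1) - x⋆‖²` is nonincreasing. The first step is the same computation
with `t₀ = 0`, so the energy stays below `L/2‖x⁰ - x⋆‖²`.
-/

open scoped RealInnerProductSpace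
open Set Filter Topology

variable {E : Type*} [NormedAddCommGroup E] [InnerProductSpace ℝ E]

lemma strongConvexOn_half_mul_sq_norm_sub (m : ℝ) (y : E) :
    StrongConvexOn univ m fun x ↦ m / 2 * ‖x - y‖ ^ 2 := by
  rw [strongConvexOn_iff_convex]
  have h : (fun x : E ↦ m / 2 * ‖x - y‖ ^ 2 - m / 2 * ‖x‖ ^ 2) =
      fun x ↦ (-m • innerₛₗ ℝ y) x + m / 2 * ‖y‖ ^ 2 := by
    ext x
    simp only [norm_sub_sq_real, LinearMap.smul_apply, innerₛₗ_apply_apply, smul_eq_mul,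
      real_inner_comm]
    ring
  rw [h]
  exact ((-m • innerₛₗ ℝ y).convexOn convex_univ).add_const _

lemma StrongConvexOn.add_sq_le_of_isMinOn {s : Set E} {m : ℝ} {g : E → ℝ} {a z : E}
    (hg : StrongConvexOn s m g) (ha : a ∈ s) (hmin : IsMinOn g s a) (hz : z ∈ s) :
    g a + m / 2 * ‖z - a‖ ^ 2 ≤ g z := by
  have hθ : ∀ θ ∈ Ioo (0 : ℝ) 1, g a + (1 - θ) * (m / 2 * ‖z - a‖ ^ 2) ≤ g z := by
    rintro θ ⟨hθ0, hθ1⟩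
    have hconv := hg.2 hz ha hθ0.le (sub_nonneg.2 hθ1.le) (add_sub_cancel θ 1)
    have hle : g a ≤ g (θ • z + (1 - θ) • a) :=
      hmin (hg.1 hz ha hθ0.le (sub_nonneg.2 hθ1.le) (add_sub_cancel θ 1))
    simp only [smul_eq_mul] at hconv
    nlinarith
  have hlim : Tendsto (fun θ : ℝ ↦ g a + (1 - θ) * (m / 2 * ‖z - a‖ ^ 2)) (𝓝[>] 0)
      (𝓝 (g a + m / 2 * ‖z - a‖ ^ 2)) := by
    have : Continuous fun θ : ℝ ↦ g a + (1 - θ) * (m / 2 * ‖z - a‖ ^ 2) := by fun_prop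
    simpa using (this.tendsto 0).mono_left nhdsWithin_le_nhds
  exact le_of_tendsto hlim (by filter_upwards [Ioo_mem_nhdsGT one_pos] using hθ)

section Gradient

variable [CompleteSpace E] {f : E → ℝ} {L : ℝ}

lemma le_add_inner_gradient_add_sq (hdiff : Differentiable ℝ f)
    (hsmooth : ∀ u v, ‖gradient f u - gradient f v‖ ≤ L * ‖u - v‖) (a b : E) :
    f b ≤ f a + ⟪gradient f a, b - a⟫ + L / 2 * ‖b - a‖ ^ 2 := by
  set d := b - a
  let φ : ℝ → ℝ := fun s ↦ f (a + s • d) - f a - s * ⟪gradient f a, d⟫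
  let B : ℝ → ℝ := fun s ↦ L / 2 * ‖d‖ ^ 2 * s ^ 2
  have hφ : ∀ s, HasDerivAt φ ⟪gradient f (a + s • d) - gradient f a, d⟫ s := by
    intro s
    have hline : HasDerivAt (fun s : ℝ ↦ a + s • d) d s := by
      simpa using ((hasDerivAt_id s).smul_const d).const_add a
    have hf := (hdiff (a + s • d)).hasGradientAt.hasFDerivAt.comp_hasDerivAt s hline
    exact ((hf.sub_const (f a)).sub ((hasDerivAt_id s).mul_const _)).congr_deriv
      (by simp [inner_sub_left])
  have hB : ∀ s, HasDerivAt B (L / 2 * ‖d‖ ^ 2 * (2 * s)) s := by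
    intro s
    simpa using (hasDerivAt_pow 2 s).const_mul (L / 2 * ‖d‖ ^ 2)
  have hderiv : ∀ s ∈ Ico (0 : ℝ) 1,
      ⟪gradient f (a + s • d) - gradient f a, d⟫ ≤ L / 2 * ‖d‖ ^ 2 * (2 * s) := by
    rintro s ⟨hs, -⟩
    calc ⟪gradient f (a + s • d) - gradient f a, d⟫
        ≤ ‖gradient f (a + s • d) - gradient f a‖ * ‖d‖ := real_inner_le_norm _ _
      _ ≤ L * ‖s • d‖ * ‖d‖ := by
          gcongr
          simpa using hsmooth (a + s • d) a
      _ = L / 2 * ‖d‖ ^ 2 * (2 * s) := by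
          rw [norm_smul, Real.norm_of_nonneg hs]; ring
  have h1 := image_le_of_deriv_right_le_deriv_boundary
    (fun s _ ↦ (hφ s).continuousAt.continuousWithinAt) (fun s _ ↦ (hφ s).hasDerivWithinAt)
    (by simp [φ, B]) (fun s _ ↦ (hB s).continuousAt.continuousWithinAt)
    (fun s _ ↦ (hB s).hasDerivWithinAt) hderiv (right_mem_Icc.2 zero_le_one)
  simp only [φ, B, one_smul, one_mul, one_pow, mul_one, d, add_sub_cancel] at h1
  linarith

lemma add_sq_le_of_isMin_prox_model {model : E → ℝ} {x y : E} (hdiff : Differentiable ℝ f)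
    (hsmooth : ∀ u v, ‖gradient f u - gradient f v‖ ≤ L * ‖u - v‖)
    (hconvex : ConvexOn ℝ univ model)
    (hlower : ∀ z, f y + ⟪gradient f y, z - y⟫ ≤ model z) (hupper : ∀ z, model z ≤ f z)
    (hx : ∀ z, model x + L / 2 * ‖x - y‖ ^ 2 ≤ model z + L / 2 * ‖z - y‖ ^ 2) (z : E) :
    f x + L / 2 * ‖z - x‖ ^ 2 ≤ f z + L / 2 * ‖z - y‖ ^ 2 := by
  have hstrong : StrongConvexOn univ L (model + fun z ↦ L / 2 * ‖z - y‖ ^ 2) := by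
    simpa only [StrongConvexOn, zero_add] using
      (uniformConvexOn_zero.2 hconvex).add (strongConvexOn_half_mul_sq_norm_sub L y)
  have hprox : model x + L / 2 * ‖x - y‖ ^ 2 + L / 2 * ‖z - x‖ ^ 2
      ≤ model z + L / 2 * ‖z - y‖ ^ 2 :=
    hstrong.add_sq_le_of_isMinOn (mem_univ x) (isMinOn_univ_iff.2 hx) (mem_univ z)
  have := le_add_inner_gradient_add_sq hdiff hsmooth y x
  linarith [hlower x, hupper z]

end Gradient

lemma one_le_momentum (τ : ℝ) : 1 ≤ (1 + √(1 + 4 * τ ^ 2)) / 2 := by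
  have : 1 ≤ √(1 + 4 * τ ^ 2) := Real.one_le_sqrt.2 (by nlinarith)
  linarith

lemma momentum_sq (τ : ℝ) :
    ((1 + √(1 + 4 * τ ^ 2)) / 2) ^ 2 = (1 + √(1 + 4 * τ ^ 2)) / 2 + τ ^ 2 := by
  have := Real.sq_sqrt (by positivity : (0 : ℝ) ≤ 1 + 4 * τ ^ 2)
  nlinarith

namespace APBM

variable (f : E → ℝ) (L : ℝ) (xstar : E)

noncomputable def energy (t : ℝ) (x xprev : E) : ℝ :=
  t ^ 2 * (f x - f xstar) + L / 2 * ‖t • x - (t - 1) • xprev - xstar‖ ^ 2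

variable {f L xstar}

lemma energy_step_le {τ T : ℝ} {xprev x x' y : E} (hconv : ConvexOn ℝ univ f) (hT : 0 < T)
    (hTτ : T ^ 2 = T + τ ^ 2) (hy : y = x + ((τ - 1) / T) • (x - xprev))
    (hstep : ∀ z, f x' + L / 2 * ‖z - x'‖ ^ 2 ≤ f z + L / 2 * ‖z - y‖ ^ 2) :
    energy f L xstar T x' x ≤ energy f L xstar τ x xprev := by
  have hTinv : T⁻¹ ≤ 1 := inv_le_one_of_one_le₀ (by nlinarith)
  set z := (1 - T⁻¹) • x + T⁻¹ • xstar
  have hfz : f z ≤ (1 - T⁻¹) * f x + T⁻¹ * f xstar :=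
    hconv.2 (mem_univ _) (mem_univ _) (sub_nonneg.2 hTinv) (by positivity) (by ring)
  have hzy : T • (z - y) = -(τ • x - (τ - 1) • xprev - xstar) := by
    rw [hy]; match_scalars <;> field_simp; ring
  have hzx : T • (z - x') = -(T • x' - (T - 1) • x - xstar) := by
    match_scalars <;> field_simp
  have hnorm : ∀ {u v : E}, T • u = -v → ‖v‖ ^ 2 = T ^ 2 * ‖u‖ ^ 2 := fun h ↦ by
    rw [← norm_neg, ← h, norm_smul, Real.norm_of_nonneg hT.le, mul_pow]
  have hfz' : T ^ 2 * f z ≤ τ ^ 2 * f x + T * f xstar := by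
    have e : T ^ 2 * ((1 - T⁻¹) * f x + T⁻¹ * f xstar) = τ ^ 2 * f x + T * f xstar := by
      field_simp
      linear_combination f x * hTτ
    exact e ▸ mul_le_mul_of_nonneg_left hfz (sq_nonneg T)
  unfold energy
  rw [hnorm hzy, hnorm hzx]
  linear_combination T ^ 2 * hstep z + hfz' - f xstar * hTτ

end APBM

theorem apbm_rate_tk_general {n : ℕ} {L : ℝ} (hL : 0 < L)
    (f : EuclideanSpace ℝ (Fin n) → ℝ)
    (hconv : ConvexOn ℝ Set.univ f)
    (hdiff : Differentiable ℝ f)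
    (hsmooth : ∀ u v, ‖gradient f u - gradient f v‖ ≤ L * ‖u - v‖)
    (xstar : EuclideanSpace ℝ (Fin n))
    (x y : ℕ → EuclideanSpace ℝ (Fin n)) (t : ℕ → ℝ)
    (fhat : ℕ → EuclideanSpace ℝ (Fin n) → ℝ)
    (ht1 : t 1 = 1)
    (htrec : ∀ k ≥ 1, t (k + 1) = (1 + Real.sqrt (1 + 4 * t k ^ 2)) / 2)
    (hy1 : y 1 = x 0)
    (hxmin : ∀ k ≥ 1, ∀ z,
      fhat k (x k) + L / 2 * ‖x k - y k‖ ^ 2 ≤ fhat k z + L / 2 * ‖z - y k‖ ^ 2)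
    (hyrec : ∀ k ≥ 1, y (k + 1) = x k + ((t k - 1) / t (k + 1)) • (x k - x (k - 1)))
    (hmodel_convex : ∀ k ≥ 1, ConvexOn ℝ Set.univ (fhat k))
    (hmodel_lower : ∀ k ≥ 1, ∀ z,
      f (y k) + ⟪gradient f (y k), z - y k⟫ ≤ fhat k z)
    (hmodel_upper : ∀ k ≥ 1, ∀ z, fhat k z ≤ f z) :
    ∀ k ≥ 1, f (x k) - f xstar ≤ L * ‖x 0 - xstar‖ ^ 2 / (2 * t k ^ 2) := by
  have hstep : ∀ k ≥ 1, ∀ z,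
      f (x k) + L / 2 * ‖z - x k‖ ^ 2 ≤ f z + L / 2 * ‖z - y k‖ ^ 2 :=
    fun k hk ↦ add_sq_le_of_isMin_prox_model hdiff hsmooth (hmodel_convex k hk)
      (hmodel_lower k hk) (hmodel_upper k hk) (hxmin k hk)
  have ht : ∀ k ≥ 1, 1 ≤ t k := by
    refine Nat.le_induction ht1.ge fun k hk _ ↦ ?_
    rw [htrec k hk]
    exact one_le_momentum _
  have henergy : ∀ k ≥ 1,
      APBM.energy f L xstar (t k) (x k) (x (k - 1)) ≤ L / 2 * ‖x 0 - xstar‖ ^ 2 := by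
    refine Nat.le_induction ?_ fun k hk ih ↦ le_trans ?_ ih
    · calc APBM.energy f L xstar (t 1) (x 1) (x (1 - 1))
          ≤ APBM.energy f L xstar 0 (x 0) (x 0) :=
            APBM.energy_step_le hconv (by simp [ht1]) (by simp [ht1]) (by simp [hy1])
              (hstep 1 le_rfl)
        _ = L / 2 * ‖x 0 - xstar‖ ^ 2 := by simp [APBM.energy]
    · rw [Nat.add_sub_cancel]
      exact APBM.energy_step_le hconv (by linarith [ht (k + 1) (by omega)])
        (by rw [htrec k hk]; exact momentum_sq _) (hyrec k hk) (hstep (k + 1) (by omega))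
  intro k hk
  have hE := henergy k hk
  unfold APBM.energy at hE
  have hnorm : 0 ≤ L / 2 * ‖t k • x k - (t k - 1) • x (k - 1) - xstar‖ ^ 2 := by positivity
  rw [le_div_iff₀ (by nlinarith [ht k hk])]
  linarith

/-- Theorem 1 (APBM convergence rate in terms of `t k`):
for every `k ≥ 1`, `f(x^k) − f(x⋆) ≤ L‖x⁰ − x⋆‖² / (2 t_k²)`. -/
theorem apbm_rate_tk {n : ℕ} {L : ℝ} (hL : 0 < L)
    (f : EuclideanSpace ℝ (Fin n) → ℝ)
    (hconv : ConvexOn ℝ Set.univ f)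
    (hdiff : Differentiable ℝ f)
    (hsmooth : ∀ u v, ‖gradient f u - gradient f v‖ ≤ L * ‖u - v‖)
    (xstar : EuclideanSpace ℝ (Fin n)) (hmin : ∀ z, f xstar ≤ f z)
    (x y : ℕ → EuclideanSpace ℝ (Fin n)) (t : ℕ → ℝ)
    (fhat : ℕ → EuclideanSpace ℝ (Fin n) → ℝ)
    (ht1 : t 1 = 1)
    (htrec : ∀ k ≥ 1, t (k + 1) = (1 + Real.sqrt (1 + 4 * t k ^ 2)) / 2)
    (hy1 : y 1 = x 0)
    (hxmin : ∀ k ≥ 1, ∀ z,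
      fhat k (x k) + L / 2 * ‖x k - y k‖ ^ 2 ≤ fhat k z + L / 2 * ‖z - y k‖ ^ 2)
    (hyrec : ∀ k ≥ 1, y (k + 1) = x k + ((t k - 1) / t (k + 1)) • (x k - x (k - 1)))
    (hmodel_convex : ∀ k ≥ 1, ConvexOn ℝ Set.univ (fhat k))
    (hmodel_lower : ∀ k ≥ 1, ∀ z,
      f (y k) + ⟪gradient f (y k), z - y k⟫ ≤ fhat k z)
    (hmodel_upper : ∀ k ≥ 1, ∀ z, fhat k z ≤ f z) :
    ∀ k ≥ 1, f (x k) - f xstar ≤ L * ‖x 0 - xstar‖ ^ 2 / (2 * t k ^ 2) :=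
  apbm_rate_tk_general hL f hconv hdiff hsmooth xstar x y t fhat ht1 htrec hy1 hxmin hyrec
    hmodel_convex hmodel_lower hmodel_upper
end

section
/- Let f : ℝⁿ → ℝ be convex, differentiable, and L-smooth with L > 0, and let x⋆ be a global minimizer of f. Let {x^k}, {y^k}, {t_k}, {f̂^k} be generated by the accelerated proximal bundle method (APBM) with models f̂^k satisfying Assumption 1. Then for every k ≥ 0, f(x^k) − f(x⋆) ≤ 2L‖x⁰ − x⋆‖² / (k + 1)². -/
/-!
The descent lemma for `L`-smooth `f` and the sandwich `f(y) + ⟪∇f(y), · - y⟫ ≤ f̂ ≤ f` turn every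
proximal model step `x = argmin f̂ + L/2‖· - y‖²` into the three-point inequality
`f(x) + L/2‖z - x‖² ≤ f(z) + L/2‖z - y‖²` for all `z`, the `‖z - x‖²` term coming from the
strong convexity of the proximal objective. This is exactly the inequality that drives FISTA:
combining it at `z = x^k` and `z = x⋆` with weights `t_{k+1}(t_{k+1} - 1) = t_k²` and `t_{k+1}`
shows that the energy `t_k²(f(x^k) - f(x⋆)) + L/2‖t_k x^k - (t_k - 1)x^{k-1} - x⋆‖²` never
increases, so it stays below `L/2‖x⁰ - x⋆‖²`, and `t_k ≥ (k + 1)/2` gives the rate.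
-/

open scoped RealInnerProductSpace
open Set Filter Topology

/-- The positive root `τ` of `τ² - τ = s²`. -/
noncomputable def nesterovNext (s : ℝ) : ℝ := (1 + √(1 + 4 * s ^ 2)) / 2

theorem nesterovNext_mul_sub_one (s : ℝ) : nesterovNext s * (nesterovNext s - 1) = s ^ 2 := by
  unfold nesterovNext
  linear_combination Real.sq_sqrt (by positivity : (0 : ℝ) ≤ 1 + 4 * s ^ 2) / 4

theorem add_half_le_nesterovNext (s : ℝ) : s + 1 / 2 ≤ nesterovNext s := by
  have : 2 * s ≤ √(1 + 4 * s ^ 2) := Real.le_sqrt_of_sq_le (by linarith)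
  unfold nesterovNext
  linarith

theorem half_succ_le_of_nesterovNext {t : ℕ → ℝ} (ht1 : t 1 = 1)
    (htrec : ∀ k ≥ 1, t (k + 1) = nesterovNext (t k)) :
    ∀ k : ℕ, 1 ≤ k → ((k : ℝ) + 1) / 2 ≤ t k := by
  refine Nat.le_induction (by norm_num [ht1]) fun k hk ih => ?_
  have hk' : (1 : ℝ) ≤ k := by exact_mod_cast hk
  rw [htrec k hk]
  have := add_half_le_nesterovNext (t k)
  push_cast
  linarith

section InnerProductSpace

variable {E : Type*} [NormedAddCommGroup E] [InnerProductSpace ℝ E]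

theorem StrongConvexOn.add_half_mul_norm_sub_sq_le {s : Set E} {m : ℝ} {g : E → ℝ}
    (hg : StrongConvexOn s m g) {a z : E} (ha : a ∈ s) (hmin : IsMinOn g s a) (hz : z ∈ s) :
    g a + m / 2 * ‖z - a‖ ^ 2 ≤ g z := by
  have hshrink : ∀ l ∈ Ioo (0 : ℝ) 1, g a + (1 - l) * (m / 2 * ‖z - a‖ ^ 2) ≤ g z := by
    rintro l ⟨hl0, hl1⟩
    have hmid := hg.2 ha hz (sub_nonneg.2 hl1.le) hl0.le (sub_add_cancel 1 l)
    have hle := hmin (hg.1 ha hz (sub_nonneg.2 hl1.le) hl0.le (sub_add_cancel 1 l))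
    rw [norm_sub_rev] at hmid
    simp only [smul_eq_mul, mem_ofPred_eq] at hmid hle
    nlinarith
  have hlim : Tendsto (fun l : ℝ => g a + (1 - l) * (m / 2 * ‖z - a‖ ^ 2)) (𝓝[>] 0)
      (𝓝 (g a + m / 2 * ‖z - a‖ ^ 2)) := by
    refine tendsto_nhdsWithin_of_tendsto_nhds ?_
    have hcont : Continuous fun l : ℝ => g a + (1 - l) * (m / 2 * ‖z - a‖ ^ 2) := by fun_prop
    simpa using hcont.tendsto 0
  exact le_of_tendsto hlim (eventually_of_mem (Ioo_mem_nhdsGT one_pos) hshrink)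

theorem ConvexOn.strongConvexOn_add_norm_sub_sq {s : Set E} {g : E → ℝ} (hg : ConvexOn ℝ s g)
    (m : ℝ) (y : E) : StrongConvexOn s m fun z => g z + m / 2 * ‖z - y‖ ^ 2 := by
  rw [strongConvexOn_iff_convex]
  have hsplit : (fun z => g z + m / 2 * ‖z - y‖ ^ 2 - m / 2 * ‖z‖ ^ 2)
      = fun z => g z + (((-m) • (innerSL ℝ y).toLinearMap) z + m / 2 * ‖y‖ ^ 2) := by
    ext z
    simp only [LinearMap.smul_apply, ContinuousLinearMap.coe_coe, innerSL_apply_apply,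
      smul_eq_mul, norm_sub_sq_real, real_inner_comm y z]
    ring
  rw [hsplit]
  exact hg.add ((LinearMap.convexOn _ hg.1).add_const _)

theorem norm_smul_sub_smul_sub_sq_eq (T : ℝ) (a b w : E) :
    T * (T - 1) * ‖a - b‖ ^ 2 + T * ‖w - b‖ ^ 2
      = ‖T • b - (T - 1) • a - w‖ ^ 2 + (T - 1) * ‖a - w‖ ^ 2 := by
  rw [show a - b = (a - w) - (b - w) by abel, show w - b = -(b - w) by abel,
    show T • b - (T - 1) • a - w = T • (b - w) - (T - 1) • (a - w) by module]
  simp only [norm_sub_sq_real, norm_neg, norm_smul, real_inner_smul_right, Real.norm_eq_abs,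
    mul_pow, sq_abs, real_inner_comm (a - w)]
  ring

theorem nesterov_energy_step_le {F : E → ℝ} {L T : ℝ} {a b y w : E} (hT : 1 ≤ T)
    (hstep : ∀ z, F b + L / 2 * ‖z - b‖ ^ 2 ≤ F z + L / 2 * ‖z - y‖ ^ 2) :
    T ^ 2 * (F b - F w) + L / 2 * ‖T • b - (T - 1) • a - w‖ ^ 2
      ≤ T * (T - 1) * (F a - F w) + L / 2 * ‖T • y - (T - 1) • a - w‖ ^ 2 := by
  have ha := mul_le_mul_of_nonneg_left (hstep a) (by nlinarith : 0 ≤ T * (T - 1))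
  have hw := mul_le_mul_of_nonneg_left (hstep w) (by linarith : 0 ≤ T)
  linear_combination ha + hw - L / 2 * norm_smul_sub_smul_sub_sq_eq T a b w
    + L / 2 * norm_smul_sub_smul_sub_sq_eq T a y w

theorem nesterov_energy_le {F : E → ℝ} {L : ℝ} {x y : ℕ → E} {t : ℕ → ℝ} (w : E)
    (ht1 : t 1 = 1) (htrec : ∀ k ≥ 1, t (k + 1) = nesterovNext (t k)) (hy1 : y 1 = x 0)
    (hyrec : ∀ k ≥ 1, y (k + 1) = x k + ((t k - 1) / t (k + 1)) • (x k - x (k - 1)))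
    (hstep : ∀ k ≥ 1, ∀ z, F (x k) + L / 2 * ‖z - x k‖ ^ 2 ≤ F z + L / 2 * ‖z - y k‖ ^ 2) :
    ∀ k ≥ 1, t k ^ 2 * (F (x k) - F w) + L / 2 * ‖t k • x k - (t k - 1) • x (k - 1) - w‖ ^ 2
      ≤ L / 2 * ‖x 0 - w‖ ^ 2 := by
  refine Nat.le_induction ?_ fun k hk ih => ?_
  · simpa [ht1, hy1] using nesterov_energy_step_le (a := x 0) (w := w) le_rfl (hstep 1 le_rfl)
  · have hT : 1 ≤ t (k + 1) := by
      have := half_succ_le_of_nesterovNext ht1 htrec (k + 1) (by omega)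
      have : (1 : ℝ) ≤ k := by exact_mod_cast hk
      push_cast at *
      linarith
    have hmomentum : t (k + 1) • y (k + 1) - (t (k + 1) - 1) • x k
        = t k • x k - (t k - 1) • x (k - 1) := by
      rw [hyrec k hk, smul_add, smul_smul, mul_div_cancel₀ _ (by positivity)]
      module
    have := nesterov_energy_step_le (a := x k) (w := w) hT (hstep (k + 1) (by omega))
    rw [hmomentum, htrec k hk, nesterovNext_mul_sub_one, ← htrec k hk] at this
    simpa using this.trans ih

variable [CompleteSpace E]

theorem le_add_inner_gradient_add_half_mul_norm_sub_sq {f : E → ℝ} {L : ℝ}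
    (hf : Differentiable ℝ f) {v : E} (hgrad : ∀ w, ‖gradient f w - gradient f v‖ ≤ L * ‖w - v‖)
    (u : E) : f u ≤ f v + ⟪gradient f v, u - v⟫ + L / 2 * ‖u - v‖ ^ 2 := by
  set d := u - v
  let φ : ℝ → ℝ := fun s => f (v + s • d) - s * ⟪gradient f v, d⟫ - L / 2 * s ^ 2 * ‖d‖ ^ 2
  have hφ : ∀ s,
      HasDerivAt φ (⟪gradient f (v + s • d) - gradient f v, d⟫ - L * s * ‖d‖ ^ 2) s := by
    intro s
    have hline : HasDerivAt (fun s : ℝ => v + s • d) d s := by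
      simpa using ((hasDerivAt_id s).smul_const d).const_add v
    have hcomp := (hf _).hasGradientAt.hasFDerivAt.comp_hasDerivAt s hline
    rw [InnerProductSpace.toDual_apply_apply] at hcomp
    refine ((hcomp.sub ((hasDerivAt_id s).mul_const _)).sub
      (((hasDerivAt_pow 2 s).const_mul (L / 2)).mul_const (‖d‖ ^ 2))).congr_deriv ?_
    rw [inner_sub_left]
    ring
  have hφ_nonpos : ∀ s, 0 ≤ s →
      ⟪gradient f (v + s • d) - gradient f v, d⟫ - L * s * ‖d‖ ^ 2 ≤ 0 := by
    intro s hs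
    have hlip := hgrad (v + s • d)
    rw [add_sub_cancel_left, norm_smul, Real.norm_of_nonneg hs] at hlip
    nlinarith [real_inner_le_norm (gradient f (v + s • d) - gradient f v) d, norm_nonneg d]
  have hanti : AntitoneOn φ (Icc 0 1) :=
    antitoneOn_of_hasDerivWithinAt_nonpos (convex_Icc 0 1)
      (fun s _ => (hφ s).continuousAt.continuousWithinAt) (fun s _ => (hφ s).hasDerivWithinAt)
      (fun s hs => hφ_nonpos s (interior_subset hs).1)
  have hends := hanti (left_mem_Icc.2 zero_le_one) (right_mem_Icc.2 zero_le_one) zero_le_one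
  simp only [φ, zero_smul, add_zero, zero_mul, one_smul, one_mul, ne_eq, OfNat.ofNat_ne_zero,
    not_false_eq_true, zero_pow, mul_zero, one_pow, sub_zero, mul_one] at hends
  rw [show v + d = u from add_sub_cancel v u] at hends
  linarith

theorem sub_le_half_mul_norm_sub_sq_of_forall_le {f : E → ℝ} {L : ℝ} (hf : Differentiable ℝ f)
    {a : E} (hgrad : ∀ w, ‖gradient f w - gradient f a‖ ≤ L * ‖w - a‖) (hmin : ∀ z, f a ≤ f z)
    (u : E) : f u - f a ≤ L / 2 * ‖u - a‖ ^ 2 := by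
  have hcrit : gradient f a = 0 := by
    simp [gradient, IsLocalMin.fderiv_eq_zero (Eventually.of_forall hmin)]
  have := le_add_inner_gradient_add_half_mul_norm_sub_sq hf hgrad u
  rw [hcrit, inner_zero_left] at this
  linarith

theorem model_prox_step_le {f fh : E → ℝ} {L : ℝ} {x y : E} (hf : Differentiable ℝ f)
    (hgrad : ∀ w, ‖gradient f w - gradient f y‖ ≤ L * ‖w - y‖) (hconv : ConvexOn ℝ univ fh)
    (hlower : ∀ z, f y + ⟪gradient f y, z - y⟫ ≤ fh z) (hupper : ∀ z, fh z ≤ f z)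
    (hx : ∀ z, fh x + L / 2 * ‖x - y‖ ^ 2 ≤ fh z + L / 2 * ‖z - y‖ ^ 2) (z : E) :
    f x + L / 2 * ‖z - x‖ ^ 2 ≤ f z + L / 2 * ‖z - y‖ ^ 2 := by
  have hdescent := le_add_inner_gradient_add_half_mul_norm_sub_sq hf hgrad x
  have hprox := (hconv.strongConvexOn_add_norm_sub_sq L y).add_half_mul_norm_sub_sq_le
    (mem_univ x) (isMinOn_univ_iff.2 hx) (mem_univ z)
  linarith [hlower x, hupper z]

end InnerProductSpace

theorem apbm_rate_general {n : ℕ} {L : ℝ} (hL : 0 < L)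
    (f : EuclideanSpace ℝ (Fin n) → ℝ)
    (hdiff : Differentiable ℝ f)
    (hsmooth : ∀ u v, ‖gradient f u - gradient f v‖ ≤ L * ‖u - v‖)
    (xstar : EuclideanSpace ℝ (Fin n)) (hmin : ∀ z, f xstar ≤ f z)
    (x y : ℕ → EuclideanSpace ℝ (Fin n)) (t : ℕ → ℝ)
    (fhat : ℕ → EuclideanSpace ℝ (Fin n) → ℝ)
    (ht1 : t 1 = 1)
    (htrec : ∀ k ≥ 1, t (k + 1) = (1 + Real.sqrt (1 + 4 * t k ^ 2)) / 2)
    (hy1 : y 1 = x 0)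
    (hxmin : ∀ k ≥ 1, ∀ z,
      fhat k (x k) + L / 2 * ‖x k - y k‖ ^ 2 ≤ fhat k z + L / 2 * ‖z - y k‖ ^ 2)
    (hyrec : ∀ k ≥ 1, y (k + 1) = x k + ((t k - 1) / t (k + 1)) • (x k - x (k - 1)))
    (hmodel_convex : ∀ k ≥ 1, ConvexOn ℝ Set.univ (fhat k))
    (hmodel_lower : ∀ k ≥ 1, ∀ z,
      f (y k) + ⟪gradient f (y k), z - y k⟫ ≤ fhat k z)
    (hmodel_upper : ∀ k ≥ 1, ∀ z, fhat k z ≤ f z) :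
    ∀ k : ℕ, f (x k) - f xstar ≤ 2 * L * ‖x 0 - xstar‖ ^ 2 / ((k : ℝ) + 1) ^ 2 := by
  have hstep : ∀ k ≥ 1, ∀ z, f (x k) + L / 2 * ‖z - x k‖ ^ 2 ≤ f z + L / 2 * ‖z - y k‖ ^ 2 :=
    fun k hk => model_prox_step_le hdiff (fun w => hsmooth w (y k)) (hmodel_convex k hk)
      (hmodel_lower k hk) (hmodel_upper k hk) (hxmin k hk)
  have hD : 0 ≤ L / 2 * ‖x 0 - xstar‖ ^ 2 := by positivity
  intro k
  rcases Nat.eq_zero_or_pos k with rfl | hk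
  · have := sub_le_half_mul_norm_sub_sq_of_forall_le hdiff (fun w => hsmooth w xstar) hmin (x 0)
    norm_num
    linarith
  · have henergy := nesterov_energy_le xstar ht1 htrec hy1 hyrec hstep k hk
    have hgap : 0 ≤ f (x k) - f xstar := sub_nonneg.2 (hmin _)
    have hrate : (((k : ℝ) + 1) / 2) ^ 2 * (f (x k) - f xstar) ≤ L / 2 * ‖x 0 - xstar‖ ^ 2 :=
      calc _ ≤ t k ^ 2 * (f (x k) - f xstar) := by
            gcongr; exact half_succ_le_of_nesterovNext ht1 htrec k hk
        _ ≤ _ := le_of_add_le_of_nonneg_left henergy (by positivity)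
    rw [le_div_iff₀ (by positivity)]
    linarith

/-- Corollary 1 (APBM convergence rate):
for every `k ≥ 0`, `f(x^k) − f(x⋆) ≤ 2L‖x⁰ − x⋆‖² / (k + 1)²`. -/
theorem apbm_rate {n : ℕ} {L : ℝ} (hL : 0 < L)
    (f : EuclideanSpace ℝ (Fin n) → ℝ)
    (hconv : ConvexOn ℝ Set.univ f)
    (hdiff : Differentiable ℝ f)
    (hsmooth : ∀ u v, ‖gradient f u - gradient f v‖ ≤ L * ‖u - v‖)
    (xstar : EuclideanSpace ℝ (Fin n)) (hmin : ∀ z, f xstar ≤ f z)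
    (x y : ℕ → EuclideanSpace ℝ (Fin n)) (t : ℕ → ℝ)
    (fhat : ℕ → EuclideanSpace ℝ (Fin n) → ℝ)
    (ht1 : t 1 = 1)
    (htrec : ∀ k ≥ 1, t (k + 1) = (1 + Real.sqrt (1 + 4 * t k ^ 2)) / 2)
    (hy1 : y 1 = x 0)
    (hxmin : ∀ k ≥ 1, ∀ z,
      fhat k (x k) + L / 2 * ‖x k - y k‖ ^ 2 ≤ fhat k z + L / 2 * ‖z - y k‖ ^ 2)
    (hyrec : ∀ k ≥ 1, y (k + 1) = x k + ((t k - 1) / t (k + 1)) • (x k - x (k - 1)))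
    (hmodel_convex : ∀ k ≥ 1, ConvexOn ℝ Set.univ (fhat k))
    (hmodel_lower : ∀ k ≥ 1, ∀ z,
      f (y k) + ⟪gradient f (y k), z - y k⟫ ≤ fhat k z)
    (hmodel_upper : ∀ k ≥ 1, ∀ z, fhat k z ≤ f z) :
    ∀ k : ℕ, f (x k) - f xstar ≤ 2 * L * ‖x 0 - xstar‖ ^ 2 / ((k : ℝ) + 1) ^ 2 :=
  apbm_rate_general hL f hdiff hsmooth xstar hmin x y t fhat ht1 htrec hy1 hxmin hyrec hmodel_convex
    hmodel_lower hmodel_upper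
end

section
/- Let f : ℝⁿ → ℝ be convex and differentiable and let L > 0. Let {y^k}_{k≥1} and {x^k}_{k≥1} be points of ℝⁿ and define the two-cut models recursively by f̂¹(x) = f(y¹) + ⟨∇f(y¹), x − y¹⟩ and, for k ≥ 1, f̂^{k+1}(x) = max{ f̂^k(x^k) + ⟨L(y^k − x^k), x − x^k⟩, f(y^{k+1}) + ⟨∇f(y^{k+1}), x − y^{k+1}⟩ }. Assume that for each k ≥ 1, x^k is a global minimizer of x ↦ f̂^k(x) + (L/2)‖x − y^k‖². Then for every k ≥ 1: (a) f̂^k is convex; (b) f̂^k(x) ≥ f(y^k) + ⟨∇f(y^k), x − y^k⟩ for all x; (c) f̂^k(x) ≤ f(x) for all x. -/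
/-!
Induction on `k`. Each model is a maximum of affine functions, hence convex, and its last cut is
the linearization of `f` at `y^k`. Both cuts of `f̂^{k+1}` minorize `f`: the linearization by the
gradient inequality for convex `f`, and the aggregate cut because `L(y^k - x^k)` is a subgradient
of the convex `f̂^k ≤ f` at the proximal point `x^k`. That subgradient property follows by comparing
`x^k` with the points `(1 - t) x^k + t z` of the segment to `z`, dividing by `t` and letting
`t → 0⁺`.
-/

open Set Filter Topology
open scoped RealInnerProductSpace

section InnerProductSpace

variable {E : Type*} [NormedAddCommGroup E] [InnerProductSpace ℝ E]

lemma convexOn_univ_const_add_inner_sub (c : ℝ) (v p : E) :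
    ConvexOn ℝ univ (fun z => c + ⟪v, z - p⟫) := by
  refine ⟨convex_univ, fun a _ b _ s t _ _ hst => le_of_eq ?_⟩
  simp only [smul_eq_mul, inner_sub_right, inner_add_right, inner_smul_right]
  linear_combination (⟪v, p⟫ - c) * hst

lemma ConvexOn.add_inner_gradient_sub_le [CompleteSpace E] {f : E → ℝ}
    (hf : ConvexOn ℝ univ f) {a : E} (hfa : DifferentiableAt ℝ f a) (z : E) :
    f a + ⟪gradient f a, z - a⟫ ≤ f z := by
  set line : ℝ →ᵃ[ℝ] E := AffineMap.lineMap a z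
  have hline : HasDerivAt (f ∘ line) ⟪gradient f a, z - a⟫ 0 := by
    have hfa' : HasFDerivAt f (InnerProductSpace.toDual ℝ E (gradient f a)) (line 0) := by
      simpa [line] using hasGradientAt_iff_hasFDerivAt.1 hfa.hasGradientAt
    simpa using hfa'.comp_hasDerivAt 0 AffineMap.hasDerivAt_lineMap
  have := (hf.comp_affineMap line).le_slope_of_hasDerivAt (mem_univ 0) (mem_univ 1) one_pos hline
  simp only [slope_def_field, Function.comp_apply, line, AffineMap.lineMap_apply_zero,
    AffineMap.lineMap_apply_one, sub_zero, div_one] at this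
  linarith

lemma ConvexOn.add_inner_smul_sub_le_of_isMinOn {g : E → ℝ} (hg : ConvexOn ℝ univ g)
    {L : ℝ} {p q : E} (hp : IsMinOn (fun z => g z + L / 2 * ‖z - q‖ ^ 2) univ p) (z : E) :
    g p + ⟪L • (q - p), z - p⟫ ≤ g z := by
  let c := L / 2 * ‖z - p‖ ^ 2
  have hsegment : ∀ t ∈ Ioc (0 : ℝ) 1, ⟪L • (q - p), z - p⟫ ≤ g z - g p + c * t := by
    rintro t ⟨ht, ht1⟩
    have hconv : g ((1 - t) • p + t • z) ≤ (1 - t) * g p + t * g z :=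
      hg.2 (mem_univ p) (mem_univ z) (by linarith) ht.le (by ring)
    have hmin := isMinOn_univ_iff.1 hp ((1 - t) • p + t • z)
    have hnorm : ‖(1 - t) • p + t • z - q‖ ^ 2
        = ‖p - q‖ ^ 2 + 2 * t * ⟪p - q, z - p⟫ + t ^ 2 * ‖z - p‖ ^ 2 := by
      rw [show (1 - t) • p + t • z - q = (p - q) + t • (z - p) by module, norm_add_sq_real,
        real_inner_smul_right, norm_smul, mul_pow, Real.norm_eq_abs, sq_abs]
      ring
    have hinner : ⟪L • (q - p), z - p⟫ = -(L * ⟪p - q, z - p⟫) := by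
      rw [real_inner_smul_left, ← neg_sub p q, inner_neg_left]; ring
    rw [hnorm] at hmin
    refine le_of_mul_le_mul_left ?_ ht
    rw [hinner]
    linear_combination hmin + hconv
  have hlim : Tendsto (fun t => g z - g p + c * t) (𝓝[>] 0) (𝓝 (g z - g p)) :=
    ((continuous_const.add (continuous_const_mul c)).tendsto' 0 _ (by simp)).mono_left
      nhdsWithin_le_nhds
  have := ge_of_tendsto hlim (by
    filter_upwards [Ioc_mem_nhdsGT (zero_lt_one' ℝ)] with t ht using hsegment t ht)
  linarith

end InnerProductSpace

theorem two_cut_model_assumption_general {n : ℕ} {L : ℝ}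
    (f : EuclideanSpace ℝ (Fin n) → ℝ)
    (hconv : ConvexOn ℝ Set.univ f)
    (hdiff : Differentiable ℝ f)
    (x y : ℕ → EuclideanSpace ℝ (Fin n))
    (fhat : ℕ → EuclideanSpace ℝ (Fin n) → ℝ)
    (hfhat1 : ∀ z, fhat 1 z = f (y 1) + ⟪gradient f (y 1), z - y 1⟫)
    (hfhatrec : ∀ k ≥ 1, ∀ z, fhat (k + 1) z =
      max (fhat k (x k) + ⟪L • (y k - x k), z - x k⟫)
        (f (y (k + 1)) + ⟪gradient f (y (k + 1)), z - y (k + 1)⟫))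
    (hxmin : ∀ k ≥ 1, ∀ z,
      fhat k (x k) + L / 2 * ‖x k - y k‖ ^ 2 ≤ fhat k z + L / 2 * ‖z - y k‖ ^ 2) :
    ∀ k ≥ 1,
      ConvexOn ℝ Set.univ (fhat k) ∧
        (∀ z, f (y k) + ⟪gradient f (y k), z - y k⟫ ≤ fhat k z) ∧
        (∀ z, fhat k z ≤ f z) := by
  intro k hk
  induction k, hk using Nat.le_induction with
  | base =>
    rw [funext hfhat1]
    exact ⟨convexOn_univ_const_add_inner_sub _ _ _, fun _ => le_rfl,
      hconv.add_inner_gradient_sub_le (hdiff _)⟩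
  | succ k hk ih =>
    obtain ⟨hconv_k, -, hle_k⟩ := ih
    have hsubgrad := hconv_k.add_inner_smul_sub_le_of_isMinOn
      (isMinOn_univ_iff.2 (hxmin k hk))
    rw [funext (hfhatrec k hk)]
    exact ⟨(convexOn_univ_const_add_inner_sub _ _ _).sup
        (convexOn_univ_const_add_inner_sub _ _ _),
      fun _ => le_max_right _ _,
      fun z => max_le ((hsubgrad z).trans (hle_k z))
        (hconv.add_inner_gradient_sub_le (hdiff _) z)⟩

/-- The two-cut model, defined recursively by
`f̂¹(x) = f(y¹) + ⟨∇f(y¹), x − y¹⟩` and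
`f̂^{k+1}(x) = max{ f̂^k(x^k) + ⟨L(y^k − x^k), x − x^k⟩, f(y^{k+1}) + ⟨∇f(y^{k+1}), x − y^{k+1}⟩ }`,
where `x^k` globally minimizes `x ↦ f̂^k(x) + (L/2)‖x − y^k‖²`, satisfies Assumption 1 for
every `k ≥ 1`. -/
theorem two_cut_model_assumption {n : ℕ} {L : ℝ} (hL : 0 < L)
    (f : EuclideanSpace ℝ (Fin n) → ℝ)
    (hconv : ConvexOn ℝ Set.univ f)
    (hdiff : Differentiable ℝ f)
    (x y : ℕ → EuclideanSpace ℝ (Fin n))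
    (fhat : ℕ → EuclideanSpace ℝ (Fin n) → ℝ)
    (hfhat1 : ∀ z, fhat 1 z = f (y 1) + ⟪gradient f (y 1), z - y 1⟫)
    (hfhatrec : ∀ k ≥ 1, ∀ z, fhat (k + 1) z =
      max (fhat k (x k) + ⟪L • (y k - x k), z - x k⟫)
        (f (y (k + 1)) + ⟪gradient f (y (k + 1)), z - y (k + 1)⟫))
    (hxmin : ∀ k ≥ 1, ∀ z,
      fhat k (x k) + L / 2 * ‖x k - y k‖ ^ 2 ≤ fhat k z + L / 2 * ‖z - y k‖ ^ 2) :
    ∀ k ≥ 1,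
      ConvexOn ℝ Set.univ (fhat k) ∧
        (∀ z, f (y k) + ⟪gradient f (y k), z - y k⟫ ≤ fhat k z) ∧
        (∀ z, fhat k z ≤ f z) :=
  two_cut_model_assumption_general f hconv hdiff x y fhat hfhat1 hfhatrec hxmin
end

section
/- Let f : ℝⁿ → ℝ be convex, differentiable, and L-smooth with L > 0. Let y ∈ ℝⁿ and let f̂ : ℝⁿ → ℝ satisfy: f̂ is convex, f̂(x) ≥ f(y) + ⟨∇f(y), x − y⟩ for all x, and f̂(x) ≤ f(x) for all x. Let x⁺ be a global minimizer of x ↦ f̂(x) + (L/2)‖x − y‖². Then for every x ∈ ℝⁿ, f(x⁺) − f(x) ≤ (L/2)‖x − y‖² − (L/2)‖x − x⁺‖². -/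
/-!
By the descent lemma, `f x⁺ ≤ f y + ⟪∇f y, x⁺ - y⟫ + (L/2)‖x⁺ - y‖²`, and the affine part is at
most `f̂ x⁺`. The function `f̂ + (L/2)‖· - y‖²` is `L`-strongly convex with minimizer `x⁺`, so it
exceeds its minimum at `x` by at least `(L/2)‖x - x⁺‖²` (three-point inequality); together with
`f̂ x ≤ f x` this is the claim.
-/

open scoped RealInnerProductSpace

open Set Filter Topology InnerProductSpace

theorem nonpos_of_forall_le_mul {a K : ℝ} (h : ∀ t ∈ Ioo (0 : ℝ) 1, a ≤ t * K) : a ≤ 0 := by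
  have hlim : Tendsto (fun t : ℝ => t * K) (𝓝[>] 0) (𝓝 0) :=
    ((continuous_mul_const K).tendsto' 0 0 (zero_mul K)).mono_left nhdsWithin_le_nhds
  exact ge_of_tendsto hlim (eventually_of_mem (Ioo_mem_nhdsGT zero_lt_one) h)

section InnerProductSpace

variable {E : Type*} [NormedAddCommGroup E] [InnerProductSpace ℝ E]

theorem norm_smul_add_one_sub_smul_sq (a b : E) (t : ℝ) :
    ‖t • a + (1 - t) • b‖ ^ 2 = t * ‖a‖ ^ 2 + (1 - t) * ‖b‖ ^ 2 - t * (1 - t) * ‖a - b‖ ^ 2 := by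
  rw [norm_add_sq_real, norm_sub_sq_real, norm_smul, norm_smul, real_inner_smul_left,
    real_inner_smul_right, mul_pow, mul_pow, Real.norm_eq_abs, Real.norm_eq_abs, sq_abs, sq_abs]
  ring

/-- Three-point inequality for a minimizer of `g + c‖· - y‖²` with `g` convex. -/
theorem ConvexOn.add_sq_norm_sub_le_of_forall_le {g : E → ℝ} (hg : ConvexOn ℝ univ g) (c : ℝ)
    {y xp : E} (hmin : ∀ z, g xp + c * ‖xp - y‖ ^ 2 ≤ g z + c * ‖z - y‖ ^ 2) (x : E) :
    g xp + c * ‖xp - y‖ ^ 2 + c * ‖x - xp‖ ^ 2 ≤ g x + c * ‖x - y‖ ^ 2 := by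
  suffices h : ∀ t ∈ Ioo (0 : ℝ) 1, g xp + c * ‖xp - y‖ ^ 2 + c * ‖x - xp‖ ^ 2
      - (g x + c * ‖x - y‖ ^ 2) ≤ t * (c * ‖x - xp‖ ^ 2) by
    linarith [nonpos_of_forall_le_mul h]
  rintro t ⟨ht0, ht1⟩
  have hconv := hg.2 (mem_univ x) (mem_univ xp) ht0.le (sub_nonneg.mpr ht1.le) (add_sub_cancel t 1)
  simp only [smul_eq_mul] at hconv
  have hnorm : ‖(t • x + (1 - t) • xp) - y‖ ^ 2
      = t * ‖x - y‖ ^ 2 + (1 - t) * ‖xp - y‖ ^ 2 - t * (1 - t) * ‖x - xp‖ ^ 2 := by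
    rw [show t • x + (1 - t) • xp - y = t • (x - y) + (1 - t) • (xp - y) by module,
      norm_smul_add_one_sub_smul_sq, sub_sub_sub_cancel_right]
  have hz := hmin (t • x + (1 - t) • xp)
  rw [hnorm] at hz
  nlinarith

variable [CompleteSpace E]

theorem Differentiable.hasDerivAt_comp_add_smul {f : E → ℝ} (hdiff : Differentiable ℝ f)
    (y v : E) (t : ℝ) :
    HasDerivAt (fun s : ℝ => f (y + s • v)) ⟪gradient f (y + t • v), v⟫ t := by
  have hline : HasDerivAt (fun s : ℝ => y + s • v) v t := by
    simpa using ((hasDerivAt_id t).smul_const v).const_add y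
  simpa [Function.comp_def, toDual_apply_apply] using
    (hdiff _).hasGradientAt.hasFDerivAt.comp_hasDerivAt t hline

theorem descent_lemma {L : ℝ} {f : E → ℝ} (hdiff : Differentiable ℝ f)
    (hsmooth : ∀ u v, ‖gradient f u - gradient f v‖ ≤ L * ‖u - v‖) (y v : E) :
    f (y + v) ≤ f y + ⟪gradient f y, v⟫ + L / 2 * ‖v‖ ^ 2 := by
  set φ : ℝ → ℝ := fun t => f (y + t • v) - t * ⟪gradient f y, v⟫ - L / 2 * t ^ 2 * ‖v‖ ^ 2
  have hφ : ∀ t, HasDerivAt φ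
      (⟪gradient f (y + t • v), v⟫ - ⟪gradient f y, v⟫ - L * t * ‖v‖ ^ 2) t := by
    intro t
    have h := ((hdiff.hasDerivAt_comp_add_smul y v t).sub
      ((hasDerivAt_id t).mul_const ⟪gradient f y, v⟫)).sub
      (((hasDerivAt_pow 2 t).const_mul (L / 2)).mul_const (‖v‖ ^ 2))
    exact h.congr_deriv (by push_cast; ring)
  have hφ_nonpos : ∀ t ∈ interior (Ici (0 : ℝ)),
      ⟪gradient f (y + t • v), v⟫ - ⟪gradient f y, v⟫ - L * t * ‖v‖ ^ 2 ≤ 0 := by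
    intro t ht
    rw [interior_Ici, mem_Ioi] at ht
    have hnorm : ‖y + t • v - y‖ = t * ‖v‖ := by simp [norm_smul, abs_of_pos ht]
    rw [sub_nonpos]
    calc ⟪gradient f (y + t • v), v⟫ - ⟪gradient f y, v⟫
        = ⟪gradient f (y + t • v) - gradient f y, v⟫ := (inner_sub_left _ _ _).symm
      _ ≤ ‖gradient f (y + t • v) - gradient f y‖ * ‖v‖ := real_inner_le_norm _ _
      _ ≤ L * (t * ‖v‖) * ‖v‖ := by
          rw [← hnorm]; exact mul_le_mul_of_nonneg_right (hsmooth _ _) (norm_nonneg v)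
      _ = L * t * ‖v‖ ^ 2 := by ring
  have hanti : AntitoneOn φ (Ici 0) :=
    antitoneOn_of_hasDerivWithinAt_nonpos (convex_Ici 0)
      (fun t _ => (hφ t).continuousAt.continuousWithinAt) (fun t _ => (hφ t).hasDerivWithinAt)
      hφ_nonpos
  have h01 := hanti self_mem_Ici (mem_Ici.mpr zero_le_one) zero_le_one
  simp only [φ, zero_smul, one_smul, add_zero, zero_mul, one_mul, one_pow, sub_zero] at h01
  linarith

end InnerProductSpace

theorem bundle_step_descent_general {n : ℕ} {L : ℝ}
    (f : EuclideanSpace ℝ (Fin n) → ℝ)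
    (hdiff : Differentiable ℝ f)
    (hsmooth : ∀ u v, ‖gradient f u - gradient f v‖ ≤ L * ‖u - v‖)
    (y : EuclideanSpace ℝ (Fin n))
    (fhat : EuclideanSpace ℝ (Fin n) → ℝ)
    (hfhat_convex : ConvexOn ℝ Set.univ fhat)
    (hfhat_lower : ∀ z, f y + ⟪gradient f y, z - y⟫ ≤ fhat z)
    (hfhat_upper : ∀ z, fhat z ≤ f z)
    (xplus : EuclideanSpace ℝ (Fin n))
    (hxplus : ∀ z, fhat xplus + L / 2 * ‖xplus - y‖ ^ 2 ≤ fhat z + L / 2 * ‖z - y‖ ^ 2) :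
    ∀ x, f xplus - f x ≤ L / 2 * ‖x - y‖ ^ 2 - L / 2 * ‖x - xplus‖ ^ 2 := by
  intro x
  have hdescent := descent_lemma hdiff hsmooth y (xplus - y)
  rw [add_sub_cancel] at hdescent
  have hthree_point := hfhat_convex.add_sq_norm_sub_le_of_forall_le (L / 2) hxplus x
  linarith [hfhat_lower xplus, hfhat_upper x]

/-- One-step descent inequality for the proximal bundle step: if `f̂` satisfies
Assumption 1 at `y` and `x⁺` globally minimizes `x ↦ f̂(x) + (L/2)‖x − y‖²`, then
`f(x⁺) − f(x) ≤ (L/2)‖x − y‖² − (L/2)‖x − x⁺‖²` for every `x`. -/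
theorem bundle_step_descent {n : ℕ} {L : ℝ} (hL : 0 < L)
    (f : EuclideanSpace ℝ (Fin n) → ℝ)
    (hconv : ConvexOn ℝ Set.univ f)
    (hdiff : Differentiable ℝ f)
    (hsmooth : ∀ u v, ‖gradient f u - gradient f v‖ ≤ L * ‖u - v‖)
    (y : EuclideanSpace ℝ (Fin n))
    (fhat : EuclideanSpace ℝ (Fin n) → ℝ)
    (hfhat_convex : ConvexOn ℝ Set.univ fhat)
    (hfhat_lower : ∀ z, f y + ⟪gradient f y, z - y⟫ ≤ fhat z)
    (hfhat_upper : ∀ z, fhat z ≤ f z)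
    (xplus : EuclideanSpace ℝ (Fin n))
    (hxplus : ∀ z, fhat xplus + L / 2 * ‖xplus - y‖ ^ 2 ≤ fhat z + L / 2 * ‖z - y‖ ^ 2) :
    ∀ x, f xplus - f x ≤ L / 2 * ‖x - y‖ ^ 2 - L / 2 * ‖x - xplus‖ ^ 2 :=
  bundle_step_descent_general f hdiff hsmooth y fhat hfhat_convex hfhat_lower hfhat_upper xplus
    hxplus
end
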